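/- arXiv:1211.4881 — 6 statements merged into one kernel-verified Lean document; each statement's English description precedes it below -/
import Mathlib

section
/- Let v=(v_1,...,v_d) be nonnegative integers with v_1+...+v_d = k > 0 and v_1+2v_2+...+d*v_d = n. Define W_{m,l}(v) = sum over tuples i in N_0^d with i_1+...+i_d = l and i_1+2i_2+...+d*i_d = m of C(v_1,i_1)*...*C(v_d,i_d). Let alpha(l,m) = A*l + B*m + C be an affine function with alpha(l,m) nonzero at the relevant points. Then for any complex tau, the double sum over l=0..k and m=l..n of [alpha(k,n)/alpha(l,m)] * C(alpha(l,m), k-l) * C(tau - alpha(l,m), l) / C(k,l) * W_{m,l}(v) equals C(tau,k). -/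
/-!
By Chu–Vandermonde, `C(τ - α, l) = ∑ j, C(τ, j) C(-α, l - j)`, so the left-hand side is
`∑ j ≤ k, C(τ, j) c_j`. Writing the double sum as a sum over tuples `i ≤ v` weighted by
`∏ r, C(v_r, i_r)`, the contribution of `i` to `c_j` (for `j < k`) is a constant times `(-1)^|i|`
times a product of `k - 1` affine functions of `i`; the identity
`(x)_p · x^(q) = x · (x + q - 1)_(p + q - 1)` between falling and rising factorials is what cancels
the division by `α`. An alternating sum `∑_{i ≤ v} ∏ r, (-1)^{i_r} C(v_r, i_r) P(i)` vanishes for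
every polynomial `P` of total degree `< ∑ r, v r`, hence `c_j = 0` for `j < k`, while for `j = k`
only `i = v` survives, with coefficient `1`.
-/

open Finset

noncomputable def gchoose (x : ℂ) (j : ℕ) : ℂ :=
  (∏ i ∈ Finset.range j, (x - (i : ℂ))) / (j.factorial : ℂ)

/-- The set of tuples `i : Fin d → ℕ` with `∑ i_j = k` and `∑ j * i_j = n`
(indices weighted by `j+1`). -/
def parts (d n k : ℕ) : Finset (Fin d → ℕ) :=
  (Fintype.piFinset fun _ : Fin d => Finset.range (n + 1)).filter
    fun i => (∑ j, i j) = k ∧ (∑ j : Fin d, ((j : ℕ) + 1) * i j) = n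

/-- `W d m l v = ∑_{i ∈ π_d(m,l)} ∏_r C(v_r, i_r)`. -/
def W (d m l : ℕ) (v : Fin d → ℕ) : ℕ :=
  ∑ i ∈ parts d m l, ∏ r, (v r).choose (i r)

theorem sum_Iic_neg_one_pow_mul_choose_mul_pow_eq_zero {R : Type*} [CommRing R] {e v : ℕ}
    (h : e < v) : ∑ i ∈ Iic v, (-1) ^ i * (v.choose i : R) * (i : R) ^ e = 0 := by
  have hΔ := congr_fun (fwdDiff_iter_pow_eq_zero_of_lt (R := R) h) 0
  rw [fwdDiff_iter_eq_sum_shift, Nat.range_succ_eq_Iic, Pi.zero_apply] at hΔ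
  set S := ∑ i ∈ Iic v, (-1) ^ i * (v.choose i : R) * (i : R) ^ e
  have hsign : (-1) ^ v * S = 0 := by
    rw [← hΔ, mul_sum]
    refine sum_congr rfl fun i hi => ?_
    have hiv : i ≤ v := mem_Iic.1 hi
    rw [← pow_sub_mul_pow (-1 : R) hiv]
    simp only [zero_add, nsmul_eq_mul, mul_one, zsmul_eq_mul, Int.cast_mul, Int.cast_pow,
      Int.cast_neg, Int.cast_one, Int.cast_natCast]
    rw [← mul_assoc, ← mul_assoc, mul_assoc ((-1 : R) ^ (v - i)), ← pow_add, ← two_mul, pow_mul]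
    simp
  calc S = (-1) ^ v * ((-1) ^ v * S) := by rw [← mul_assoc, ← mul_pow]; simp
    _ = 0 := by rw [hsign, mul_zero]

open MvPolynomial in
theorem MvPolynomial.sum_Iic_prod_neg_one_pow_mul_choose_mul_eval_eq_zero {σ R : Type*}
    [CommRing R] [Fintype σ] [DecidableEq σ] (v : σ → ℕ) (P : MvPolynomial σ R)
    (hP : P.totalDegree < ∑ r, v r) :
    ∑ i ∈ Iic v, (∏ r, (-1) ^ i r * ((v r).choose (i r) : R)) * eval (fun r => (i r : R)) P
      = 0 := by
  simp_rw [eval_eq', mul_sum]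
  rw [sum_comm]
  refine sum_eq_zero fun s hs => ?_
  obtain ⟨r, hr⟩ : ∃ r, s r < v r := by
    by_contra! hvs
    have hdeg : ∑ r, s r ≤ P.totalDegree := by
      rw [← Finsupp.sum_fintype s (fun _ e => e) (fun _ => rfl)]
      exact le_totalDegree hs
    exact lt_irrefl _ (hP.trans_le ((sum_le_sum fun r _ => hvs r).trans hdeg))
  calc ∑ i ∈ Iic v, (∏ r, (-1) ^ i r * ((v r).choose (i r) : R)) *
        (coeff s P * ∏ r, (i r : R) ^ s r)
      = coeff s P * ∏ r, ∑ i ∈ Iic (v r), (-1) ^ i * ((v r).choose i : R) * (i : R) ^ s r := by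
        rw [prod_univ_sum, mul_sum]
        refine sum_congr rfl fun i _ => ?_
        simp only [prod_mul_distrib]
        ring
    _ = 0 := by
        rw [prod_eq_zero (mem_univ r) (sum_Iic_neg_one_pow_mul_choose_mul_pow_eq_zero hr),
          mul_zero]

open MvPolynomial in
theorem MvPolynomial.exists_totalDegree_le_eval_eq_descPochhammer {σ R : Type*} [CommRing R]
    [Fintype σ] (p : ℕ) (a : R) (b : σ → R) :
    ∃ P : MvPolynomial σ R, P.totalDegree ≤ p ∧
      ∀ x : σ → R, eval x P = (descPochhammer R p).eval (a + ∑ r, b r * x r) := by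
  refine ⟨∏ t ∈ range p, (C (a - t) + ∑ r, C (b r) * X r : MvPolynomial σ R), ?_, fun x => ?_⟩
  · refine (totalDegree_finsetProd _ _).trans ?_
    refine (sum_le_card_nsmul _ _ 1 fun t _ => (totalDegree_add _ _).trans ?_).trans (by simp)
    rw [totalDegree_C, zero_max]
    refine (totalDegree_finsetSum _ _).trans (Finset.sup_le fun r _ => ?_)
    rw [C_mul_X_eq_monomial]
    exact (totalDegree_monomial_le _ _).trans (by simp)
  · simp only [descPochhammer_eval_eq_prod_range, map_prod, map_add, map_sum, map_mul, eval_C,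
      eval_X]
    exact prod_congr rfl fun t _ => by ring

open Polynomial in
theorem descPochhammer_eval_mul_ascPochhammer_eval {R : Type*} [CommRing R] (x : R)
    {p q N : ℕ} (h : p + q = N + 1) :
    (descPochhammer R p).eval x * (ascPochhammer R q).eval x
      = x * (descPochhammer R N).eval (x + q - 1) := by
  have hpq : (p : R) + q = N + 1 := by exact_mod_cast congrArg (Nat.cast (R := R)) h
  rw [descPochhammer_eval_eq_ascPochhammer (r := x + (q : R) - 1),
    show x + q - 1 - N + 1 = x - p + 1 by linear_combination hpq]
  cases p with
  | zero =>
    obtain rfl : q = N + 1 := by omega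
    simp [ascPochhammer_succ_left, add_comm]
  | succ p =>
    have hmul := congr_arg (eval (x - p)) (ascPochhammer_mul R p q)
    rw [eval_mul, eval_comp, eval_add, eval_X, eval_natCast, sub_add_cancel,
      show p + q = N by omega] at hmul
    rw [descPochhammer_succ_left, eval_mul, eval_X, eval_comp, eval_sub, eval_X, eval_one,
      descPochhammer_eval_eq_ascPochhammer, mul_assoc, sub_sub, add_comm 1 (p : R), ← sub_sub,
      sub_add_cancel, hmul]
    push_cast
    ring_nf

theorem gchoose_eq_descPochhammer_eval_div (x : ℂ) (j : ℕ) :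
    gchoose x j = (descPochhammer ℂ j).eval x / j.factorial := by
  rw [gchoose, descPochhammer_eval_eq_prod_range]

theorem gchoose_eq_ringChoose (x : ℂ) (j : ℕ) : gchoose x j = Ring.choose x j := by
  rw [Ring.choose_eq_smul, gchoose_eq_descPochhammer_eval_div, ← Polynomial.aeval_eq_smeval,
    ← descPochhammer_map (algebraMap ℤ ℂ), Polynomial.aeval_def, Polynomial.eval_map,
    smul_eq_mul, div_eq_inv_mul]

theorem gchoose_add (x y : ℂ) (l : ℕ) :
    gchoose (x + y) l = ∑ j ∈ range (l + 1), gchoose x j * gchoose y (l - j) := by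
  simp only [gchoose_eq_ringChoose]
  rw [Ring.add_choose_eq l (Commute.all x y), Nat.sum_antidiagonal_eq_sum_range_succ_mk]

-- The right-hand side depends on `α` only through `α + l`, which is affine in the tuple `i`.
theorem gchoose_mul_gchoose_neg_div {α : ℂ} (hα : α ≠ 0) {j l k : ℕ} (hjl : j ≤ l)
    (hlk : l ≤ k) (hjk : j < k) :
    gchoose α (k - l) * gchoose (-α) (l - j) / (α * k.choose l)
      = (-1) ^ (l + j) * (descPochhammer ℂ j).eval (l : ℂ)
          * (descPochhammer ℂ (k - j - 1)).eval (α + l - j - 1) / k.factorial := by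
  have hneg : (descPochhammer ℂ (l - j)).eval (-α)
      = (-1) ^ (l - j) * (ascPochhammer ℂ (l - j)).eval α := by
    rw [← neg_neg α, ascPochhammer_eval_neg_eq_descPochhammer, neg_neg, ← mul_assoc, ← mul_pow]
    simp
  have hcore := descPochhammer_eval_mul_ascPochhammer_eval α
    (show (k - l) + (l - j) = (k - j - 1) + 1 by omega)
  rw [Nat.cast_sub hjl, ← add_sub_assoc] at hcore
  have hsign : (-1 : ℂ) ^ (l + j) = (-1) ^ (l - j) := by
    rw [show l + j = (l - j) + 2 * j by omega, pow_add, pow_mul]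
    simp
  have hdesc : (descPochhammer ℂ j).eval (l : ℂ) * ((l - j).factorial : ℂ) = l.factorial := by
    rw [descPochhammer_eval_eq_descFactorial, mul_comm]
    exact_mod_cast Nat.factorial_mul_descFactorial hjl
  have hdesc_ne : (descPochhammer ℂ j).eval (l : ℂ) ≠ 0 :=
    left_ne_zero_of_mul (hdesc ▸ Nat.cast_ne_zero.2 l.factorial_ne_zero)
  have hfact : ((k.choose l : ℕ) : ℂ) * l.factorial * (k - l).factorial = k.factorial := by
    exact_mod_cast Nat.choose_mul_factorial_mul_factorial hlk
  have hchoose : ((k.choose l : ℕ) : ℂ) ≠ 0 := Nat.cast_ne_zero.2 (Nat.choose_pos hlk).ne'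
  rw [gchoose_eq_descPochhammer_eval_div, gchoose_eq_descPochhammer_eval_div, hneg, hsign,
    ← hfact, ← hdesc]
  field_simp
  rw [hcore]

def weightedSum {d : ℕ} (i : Fin d → ℕ) : ℕ := ∑ r : Fin d, ((r : ℕ) + 1) * i r

theorem le_weightedSum {d : ℕ} (i : Fin d → ℕ) (r : Fin d) : i r ≤ weightedSum i :=
  (Nat.le_mul_of_pos_left _ r.succ_pos).trans
    (single_le_sum (f := fun r : Fin d => ((r : ℕ) + 1) * i r) (fun _ _ => Nat.zero_le _)
      (mem_univ r))

theorem sum_le_weightedSum {d : ℕ} (i : Fin d → ℕ) : ∑ r, i r ≤ weightedSum i :=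
  sum_le_sum fun r _ => Nat.le_mul_of_pos_left _ r.succ_pos

theorem weightedSum_mono {d : ℕ} : Monotone (weightedSum (d := d)) :=
  fun _ _ h => sum_le_sum fun r _ => Nat.mul_le_mul_left _ (h r)

theorem mem_parts {d m l : ℕ} {i : Fin d → ℕ} :
    i ∈ parts d m l ↔ ∑ r, i r = l ∧ weightedSum i = m := by
  rw [parts, mem_filter, Fintype.mem_piFinset]
  refine ⟨fun h => h.2, fun ⟨hl, hm⟩ => ⟨fun r => ?_, hl, hm⟩⟩
  exact mem_range_succ_iff.2 (hm ▸ le_weightedSum i r)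

theorem W_eq_sum_Iic {R : Type*} [CommSemiring R] (d m l : ℕ) (v : Fin d → ℕ) :
    (W d m l v : R) = ∑ i ∈ (Iic v).filter (fun i => ∑ r, i r = l ∧ weightedSum i = m),
      ∏ r, ((v r).choose (i r) : R) := by
  rw [W, Nat.cast_sum]
  push_cast
  refine (sum_subset (fun i hi => ?_) fun i hi hi' => ?_).symm
  · exact mem_parts.2 (mem_filter.1 hi).2
  · obtain ⟨r, hr⟩ : ∃ r, v r < i r := by
      by_contra! h
      exact hi' (mem_filter.2 ⟨mem_Iic.2 h, mem_parts.1 hi⟩)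
    exact prod_eq_zero (mem_univ r) (by rw [Nat.choose_eq_zero_of_lt hr, Nat.cast_zero])

theorem sum_sum_mul_W {d k n : ℕ} {v : Fin d → ℕ} (hs : ∑ r, v r = k) (hw : weightedSum v = n)
    (f : ℕ → ℕ → ℂ) :
    ∑ l ∈ range (k + 1), ∑ m ∈ Icc l n, f l m * (W d m l v : ℂ)
      = ∑ i ∈ Iic v, f (∑ r, i r) (weightedSum i) * ∏ r, ((v r).choose (i r) : ℂ) := by
  have hmaps : ∀ i ∈ Iic v, (⟨∑ r, i r, weightedSum i⟩ : Σ _ : ℕ, ℕ) ∈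
      (range (k + 1)).sigma fun l => Icc l n := by
    intro i hi
    rw [mem_Iic] at hi
    rw [mem_sigma, mem_range_succ_iff, mem_Icc, ← hs, ← hw]
    dsimp only
    exact ⟨sum_le_sum fun r _ => hi r, sum_le_weightedSum i, weightedSum_mono hi⟩
  rw [← sum_fiberwise_of_maps_to hmaps, sum_sigma]
  refine sum_congr rfl fun l _ => sum_congr rfl fun m _ => ?_
  rw [W_eq_sum_Iic, mul_sum]
  refine sum_congr (filter_congr fun i _ => ?_) fun i hi => ?_
  · simp only [Sigma.mk.injEq, heq_eq_eq]
  · simp only [mem_filter, Sigma.mk.injEq, heq_eq_eq] at hi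
    rw [hi.2.1, hi.2.2]

theorem sum_Iic_sum_range_comm {M : Type*} [AddCommMonoid M] {d k : ℕ} {v : Fin d → ℕ}
    (hs : ∑ r, v r = k) (g : (Fin d → ℕ) → ℕ → M) :
    ∑ i ∈ Iic v, ∑ j ∈ range (∑ r, i r + 1), g i j
      = ∑ j ∈ range (k + 1), ∑ i ∈ (Iic v).filter (fun i => j ≤ ∑ r, i r), g i j := by
  refine sum_comm' fun i j => ?_
  simp only [mem_Iic, mem_range_succ_iff, mem_filter]
  constructor
  · rintro ⟨hi, hj⟩
    exact ⟨⟨hi, hj⟩, hj.trans (hs ▸ sum_le_sum fun r _ => hi r)⟩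
  · rintro ⟨⟨hi, hj⟩, -⟩
    exact ⟨hi, hj⟩

section Coefficients

variable (A B C τ : ℂ) (k n : ℕ)

noncomputable def summand (l m : ℕ) : ℂ :=
  ((A * k + B * n + C) / (A * l + B * m + C)) *
    gchoose (A * l + B * m + C) (k - l) * gchoose (τ - (A * l + B * m + C)) l / (k.choose l : ℂ)

noncomputable def summandCoeff (j l m : ℕ) : ℂ :=
  ((A * k + B * n + C) / (A * l + B * m + C)) *
    gchoose (A * l + B * m + C) (k - l) * gchoose (-(A * l + B * m + C)) (l - j) /
      (k.choose l : ℂ)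

theorem summand_eq_sum (l m : ℕ) :
    summand A B C τ k n l m = ∑ j ∈ range (l + 1), gchoose τ j * summandCoeff A B C k n j l m := by
  rw [summand, sub_eq_add_neg, gchoose_add τ, mul_sum, sum_div]
  refine sum_congr rfl fun j _ => ?_
  rw [summandCoeff]
  ring

end Coefficients

theorem sum_summandCoeff_eq_zero {d k n : ℕ} {v : Fin d → ℕ} (hs : ∑ r, v r = k)
    (hw : weightedSum v = n) (A B C : ℂ)
    (hα : ∀ l m : ℕ, l ≤ k → m ≤ n → A * l + B * m + C ≠ 0) {j : ℕ} (hj : j < k) :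
    ∑ i ∈ (Iic v).filter (fun i => j ≤ ∑ r, i r),
      summandCoeff A B C k n j (∑ r, i r) (weightedSum i) * ∏ r, ((v r).choose (i r) : ℂ)
      = 0 := by
  set γ : Fin d → ℂ := fun r => A + B * ((r : ℕ) + 1) + 1
  obtain ⟨P₁, hP₁, hP₁eval⟩ :=
    MvPolynomial.exists_totalDegree_le_eval_eq_descPochhammer (σ := Fin d) j (0 : ℂ) 1
  obtain ⟨P₂, hP₂, hP₂eval⟩ :=
    MvPolynomial.exists_totalDegree_le_eval_eq_descPochhammer (k - j - 1) (C - j - 1) γ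
  set P := P₁ * P₂
  have hdeg : P.totalDegree < ∑ r, v r :=
    ((MvPolynomial.totalDegree_mul _ _).trans (add_le_add hP₁ hP₂)).trans_lt (by omega)
  have heval : ∀ i : Fin d → ℕ, MvPolynomial.eval (fun r => (i r : ℂ)) P
      = (descPochhammer ℂ j).eval ((∑ r, i r : ℕ) : ℂ) * (descPochhammer ℂ (k - j - 1)).eval
          (A * (∑ r, i r : ℕ) + B * (weightedSum i : ℕ) + C + (∑ r, i r : ℕ) - j - 1) := by
    intro i
    have hγ : ∑ r, γ r * (i r : ℂ)
        = A * ∑ r, (i r : ℂ) + B * ∑ r : Fin d, ((r : ℕ) + 1 : ℂ) * i r + ∑ r, (i r : ℂ) := by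
      simp only [γ, mul_sum, ← sum_add_distrib]
      exact sum_congr rfl fun r _ => by ring
    rw [map_mul, hP₁eval, hP₂eval, weightedSum]
    push_cast
    congr 2
    · simp
    · linear_combination hγ
  calc ∑ i ∈ (Iic v).filter (fun i => j ≤ ∑ r, i r),
        summandCoeff A B C k n j (∑ r, i r) (weightedSum i) * ∏ r, ((v r).choose (i r) : ℂ)
      = ∑ i ∈ (Iic v).filter (fun i => j ≤ ∑ r, i r),
          (A * k + B * n + C) / k.factorial * (-1) ^ j * ((∏ r, (-1) ^ i r *
            ((v r).choose (i r) : ℂ)) * MvPolynomial.eval (fun r => (i r : ℂ)) P) := by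
        refine sum_congr rfl fun i hi => ?_
        obtain ⟨hiv, hji⟩ := mem_filter.1 hi
        rw [mem_Iic] at hiv
        have hlk : ∑ r, i r ≤ k := hs ▸ sum_le_sum fun r _ => hiv r
        have hαi := hα _ _ hlk (hw ▸ weightedSum_mono hiv)
        rw [summandCoeff, show ∀ a b c e f : ℂ, a / b * c * e / f = a * (c * e / (b * f)) by
          intros; ring, gchoose_mul_gchoose_neg_div hαi hji hlk hj, heval, prod_mul_distrib,
          prod_pow_eq_pow_sum, pow_add]
        ring
    _ = ∑ i ∈ Iic v, (A * k + B * n + C) / k.factorial * (-1) ^ j * ((∏ r, (-1) ^ i r *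
            ((v r).choose (i r) : ℂ)) * MvPolynomial.eval (fun r => (i r : ℂ)) P) := by
        refine sum_filter_of_ne fun i _ hne => ?_
        by_contra! hlt
        rw [heval, descPochhammer_eval_coe_nat_of_lt hlt] at hne
        simp at hne
    _ = 0 := by
        rw [← mul_sum, MvPolynomial.sum_Iic_prod_neg_one_pow_mul_choose_mul_eval_eq_zero v P hdeg,
          mul_zero]

theorem sum_summandCoeff_self {d k n : ℕ} {v : Fin d → ℕ} (hs : ∑ r, v r = k)
    (hw : weightedSum v = n) (A B C : ℂ) (hα : A * k + B * n + C ≠ 0) :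
    ∑ i ∈ (Iic v).filter (fun i => k ≤ ∑ r, i r),
      summandCoeff A B C k n k (∑ r, i r) (weightedSum i) * ∏ r, ((v r).choose (i r) : ℂ)
      = 1 := by
  have hv : (Iic v).filter (fun i => k ≤ ∑ r, i r) = {v} := by
    ext i
    simp only [mem_filter, mem_Iic, mem_singleton]
    refine ⟨fun ⟨hiv, hki⟩ => ?_, fun h => ⟨h.le, h ▸ hs.ge⟩⟩
    have hle : ∀ r ∈ univ, i r ≤ v r := fun r _ => hiv r
    funext r
    exact (sum_eq_sum_iff_of_le hle).1 (le_antisymm (sum_le_sum hle) (hs ▸ hki)) r (mem_univ r)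
  rw [hv, sum_singleton, hs, hw, summandCoeff]
  simp [gchoose, hα]

theorem stmt2_general (d k n : ℕ) (v : Fin d → ℕ)
    (hs : ∑ r, v r = k) (hw : ∑ r : Fin d, ((r : ℕ) + 1) * v r = n)
    (A B C : ℂ)
    (hα : ∀ l m : ℕ, l ≤ k → m ≤ n → A * l + B * m + C ≠ 0)
    (τ : ℂ) :
    ∑ l ∈ Finset.range (k + 1), ∑ m ∈ Finset.Icc l n,
      ((A * k + B * n + C) / (A * l + B * m + C)) *
        gchoose (A * l + B * m + C) (k - l) * gchoose (τ - (A * l + B * m + C)) l /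
          (k.choose l : ℂ) * (W d m l v : ℂ)
      = gchoose τ k := by
  change ∑ l ∈ range (k + 1), ∑ m ∈ Icc l n, summand A B C τ k n l m * (W d m l v : ℂ) = _
  simp_rw [sum_sum_mul_W hs hw, summand_eq_sum, sum_mul, mul_assoc]
  rw [sum_Iic_sum_range_comm hs]
  simp_rw [← mul_sum]
  rw [sum_range_succ, sum_eq_zero fun j hj => by
      rw [sum_summandCoeff_eq_zero hs hw A B C hα (mem_range.1 hj), mul_zero],
    sum_summandCoeff_self hs hw A B C (hα k n le_rfl le_rfl), zero_add, mul_one]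

theorem stmt2 (d k n : ℕ) (hk : 0 < k) (v : Fin d → ℕ)
    (hs : ∑ r, v r = k) (hw : ∑ r : Fin d, ((r : ℕ) + 1) * v r = n)
    (A B C : ℂ)
    (hα : ∀ l m : ℕ, l ≤ k → m ≤ n → A * l + B * m + C ≠ 0)
    (τ : ℂ) :
    ∑ l ∈ Finset.range (k + 1), ∑ m ∈ Finset.Icc l n,
      ((A * k + B * n + C) / (A * l + B * m + C)) *
        gchoose (A * l + B * m + C) (k - l) * gchoose (τ - (A * l + B * m + C)) l /
          (k.choose l : ℂ) * (W d m l v : ℂ)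
      = gchoose τ k :=
  stmt2_general d k n v hs hw A B C hα τ
end

section
/- Hagen–Rothe identity: for complex numbers x, y, z (with x + l*z and y + (k-l)*z nonzero for 0 <= l <= k, and x+y+kz nonzero), sum over l=0..k of [x/(x+l*z)] * C(x+l*z, l) * [y/(y+(k-l)*z)] * C(y+(k-l)*z, k-l) equals [(x+y)/(x+y+k*z)] * C(x+y+k*z, k). -/
/-!
Write `A n x = x / (x + n z) * C(x + n z, n)`; this is a polynomial in `x` with `A 0 = 1` and
`A (n+1) 0 = 0`, and it satisfies the difference equation `A (n+1) (t+1) - A (n+1) t = A n (t+z)`.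
For fixed `x`, both sides of the convolution `∑ A l x * A (k-l) y = A k (x+y)` are polynomials
in `y`; by induction on `k` their difference has vanishing forward difference, and it vanishes at
`y = 0`, so it vanishes at every natural number and hence identically.
-/

open Finset

open Polynomial Nat

theorem Polynomial.eq_zero_of_eval_zero_of_eval_add_one {R : Type*} [CommRing R] [IsDomain R]
    [CharZero R] {p : R[X]} (h0 : p.eval 0 = 0) (hp : ∀ t, p.eval (t + 1) = p.eval t) :
    p = 0 := by
  have hnat : ∀ n : ℕ, p.IsRoot n := by
    intro n
    induction n with
    | zero => simpa using h0
    | succ n ih => rwa [IsRoot, cast_succ, hp]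
  exact p.eq_zero_of_infinite_isRoot <|
    Set.infinite_of_injective_forall_mem Nat.cast_injective hnat

section Rothe

variable {K : Type*} [Field K]

/-- `x / (x + n z) * C(x + n z, n)` as a polynomial in `x`: for `n ≥ 1` it is
`x / n * C(x + n z - 1, n - 1)`. -/
noncomputable def rothePoly (z : K) : ℕ → K[X]
  | 0 => 1
  | n + 1 => C ((n + 1)! : K)⁻¹ * X * (descPochhammer K n).comp (X + C ((n + 1) * z - 1))

@[simp]
theorem rothePoly_zero (z : K) : rothePoly z 0 = 1 := rfl

theorem rothePoly_succ_eval (z t : K) (n : ℕ) :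
    (rothePoly z (n + 1)).eval t =
      t * (descPochhammer K n).eval (t + (n + 1) * z - 1) / (n + 1)! := by
  simp only [rothePoly, eval_mul, eval_C, eval_X, eval_comp, eval_add]
  ring_nf

@[simp]
theorem rothePoly_succ_eval_zero (z : K) (n : ℕ) : (rothePoly z (n + 1)).eval 0 = 0 := by
  simp [rothePoly_succ_eval]

variable [CharZero K]

theorem rothePoly_succ_eval_add_one_sub (z t : K) (n : ℕ) :
    (rothePoly z (n + 1)).eval (t + 1) - (rothePoly z (n + 1)).eval t =
      (rothePoly z n).eval (t + z) := by
  cases n with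
  | zero => simp [rothePoly_succ_eval]
  | succ m =>
    simp only [rothePoly_succ_eval]
    set w := t + ((m + 1 : ℕ) + 1) * z - 1
    have hw₁ : t + 1 + ((m + 1 : ℕ) + 1) * z - 1 = w + 1 := by ring
    have hw₂ : t + z + ((m : ℕ) + 1) * z - 1 = w := by simp only [w]; push_cast; ring
    -- both falling factorials of length `m + 1` are expressed through the one of length `m` at `w`
    have hsucc_left : (descPochhammer K (m + 1)).eval (w + 1) =
        (w + 1) * (descPochhammer K m).eval w := by
      simp [descPochhammer_succ_left, eval_comp]
    rw [hw₁, hw₂, hsucc_left, descPochhammer_succ_eval, factorial_succ (m + 1)]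
    push_cast
    have hm : (m : K) + 1 + 1 ≠ 0 := by norm_cast
    have hfac : ((m + 1)! : K) ≠ 0 := Nat.cast_ne_zero.2 (factorial_ne_zero _)
    field_simp
    simp only [w]
    push_cast
    ring

theorem sum_antidiagonal_rothePoly_eval_mul (z x y : K) (k : ℕ) :
    ∑ p ∈ antidiagonal k, (rothePoly z p.1).eval x * (rothePoly z p.2).eval y =
      (rothePoly z k).eval (x + y) := by
  induction k generalizing y with
  | zero => simp
  | succ k ih =>
    set F : K[X] := ∑ p ∈ antidiagonal (k + 1), C ((rothePoly z p.1).eval x) * rothePoly z p.2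
    have hF : ∀ t, F.eval t = (rothePoly z (k + 1)).eval x +
        ∑ p ∈ antidiagonal k, (rothePoly z p.1).eval x * (rothePoly z (p.2 + 1)).eval t := by
      intro t
      simp [F, eval_finsetSum, Nat.sum_antidiagonal_succ']
    suffices F - (rothePoly z (k + 1)).comp (C x + X) = 0 by
      simpa [F, eval_finsetSum, sub_eq_zero] using congr_arg (eval y) this
    apply eq_zero_of_eval_zero_of_eval_add_one
    · simp [hF]
    · intro t
      rw [← sub_eq_zero]
      simp only [eval_sub, eval_comp, eval_add, eval_X, eval_C, hF]
      have hsum :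
          ∑ p ∈ antidiagonal k, (rothePoly z p.1).eval x * (rothePoly z (p.2 + 1)).eval (t + 1) -
            ∑ p ∈ antidiagonal k, (rothePoly z p.1).eval x * (rothePoly z (p.2 + 1)).eval t =
          (rothePoly z k).eval (x + t + z) := by
        rw [← sum_sub_distrib, add_assoc, ← ih]
        refine sum_congr rfl fun p _ => ?_
        rw [← mul_sub, rothePoly_succ_eval_add_one_sub]
      rw [← add_assoc x t 1]
      linear_combination hsum - rothePoly_succ_eval_add_one_sub z (x + t) k

end Rothe

theorem gchoose_eq_descPochhammer_eval_div_s6 (w : ℂ) (n : ℕ) :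
    gchoose w n = (descPochhammer ℂ n).eval w / n ! := by
  rw [gchoose, descPochhammer_eval_eq_prod_range]

theorem rothePoly_eval_eq_div_mul_gchoose (z t : ℂ) (n : ℕ) (h : t + n * z ≠ 0) :
    (rothePoly z n).eval t = t / (t + n * z) * gchoose (t + n * z) n := by
  rw [gchoose_eq_descPochhammer_eval_div_s6]
  cases n with
  | zero => simp_all
  | succ n =>
    push_cast at h ⊢
    rw [rothePoly_succ_eval, descPochhammer_succ_left]
    simp only [eval_mul, eval_X, eval_comp, eval_sub, eval_one]
    field_simp

theorem stmt6 (k : ℕ) (x y z : ℂ)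
    (hx : ∀ l : ℕ, l ≤ k → x + l * z ≠ 0)
    (hy : ∀ l : ℕ, l ≤ k → y + l * z ≠ 0)
    (hxy : x + y + k * z ≠ 0) :
    ∑ l ∈ Finset.range (k + 1),
      (x / (x + l * z)) * gchoose (x + l * z) l *
        (y / (y + ((k - l : ℕ) : ℂ) * z)) * gchoose (y + ((k - l : ℕ) : ℂ) * z) (k - l)
      = ((x + y) / (x + y + k * z)) * gchoose (x + y + k * z) k := by
  rw [← rothePoly_eval_eq_div_mul_gchoose z _ k hxy, ← sum_antidiagonal_rothePoly_eval_mul,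
    Nat.sum_antidiagonal_eq_sum_range_succ fun i j => (rothePoly z i).eval x * (rothePoly z j).eval y]
  refine sum_congr rfl fun l hl => ?_
  have hlk : l ≤ k := mem_range_succ_iff.mp hl
  rw [rothePoly_eval_eq_div_mul_gchoose z x l (hx l hlk),
    rothePoly_eval_eq_div_mul_gchoose z y (k - l) (hy (k - l) (Nat.sub_le k l))]
  ring
end

section
/- For an integer z with z > k >= 1, 1/C(z,k) equals the sum over l=1..k of (-1)^{l-1} * C(k,l) * l/(z-k+l). -/
/-!
The partial-fraction expansion `∑ₗ (-1)ˡ C(n,l)/(x+l) = n!/(x(x+1)⋯(x+n))` follows by induction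
on `n` from Pascal's rule. At `x = z - k` the right side is `1/(x·C(z,k))`. Multiplying by `x` and
writing `x/(x+l) = 1 - l/(x+l)`, the constant terms cancel because the alternating sum of
binomial coefficients vanishes.
-/

open Finset
open scoped Nat

section

open Polynomial

variable {K : Type*} [Field K]

theorem sum_alternating_choose_succ_div (n : ℕ) (x : K) :
    ∑ l ∈ range (n + 2), (-1) ^ l * ((n + 1).choose l : K) / (x + l)
      = ∑ l ∈ range (n + 1), (-1) ^ l * (n.choose l : K) / (x + l)
        - ∑ l ∈ range (n + 1), (-1) ^ l * (n.choose l : K) / (x + 1 + l) := by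
  rw [sub_eq_add_neg, ← sum_neg_distrib]
  convert sum_choose_succ_mul (fun i _ ↦ (-1 : K) ^ i / (x + i)) n using 1
  · exact sum_congr rfl fun i _ ↦ by ring
  · congr 1 <;> refine sum_congr rfl fun i _ ↦ ?_ <;> push_cast <;> ring

theorem sum_alternating_choose_div_eq_factorial_div_ascPochhammer (n : ℕ) (x : K)
    (hx : (ascPochhammer K (n + 1)).eval x ≠ 0) :
    ∑ l ∈ range (n + 1), (-1) ^ l * (n.choose l : K) / (x + l)
      = n ! / (ascPochhammer K (n + 1)).eval x := by
  induction n generalizing x with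
  | zero => simp
  | succ n ih =>
    set P := (ascPochhammer K (n + 1)).eval x
    set Q := (ascPochhammer K (n + 1)).eval (x + 1)
    have hP : (ascPochhammer K (n + 2)).eval x = P * (x + (n + 1)) := by
      rw [ascPochhammer_succ_eval]; push_cast; rfl
    have hQ : (ascPochhammer K (n + 2)).eval x = x * Q := by
      rw [ascPochhammer_succ_left, eval_mul, eval_comp]; simp [Q]
    have hPQ : P * (x + (n + 1)) = x * Q := hP.symm.trans hQ
    rw [hP] at hx ⊢
    have hQ0 : Q ≠ 0 := right_ne_zero_of_mul (hPQ ▸ hx)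
    rw [sum_alternating_choose_succ_div, ih x (left_ne_zero_of_mul hx), ih (x + 1) hQ0,
      div_sub_div _ _ (left_ne_zero_of_mul hx) hQ0,
      div_eq_div_iff (mul_ne_zero (left_ne_zero_of_mul hx) hQ0) hx, Nat.factorial_succ]
    push_cast
    linear_combination -(n ! : K) * P * hPQ

theorem sum_alternating_choose_div_natCast_add_one [CharZero K] (m n : ℕ) :
    ∑ l ∈ range (n + 1), (-1) ^ l * (n.choose l : K) / ((m + 1 : K) + l)
      = 1 / ((m + 1) * ((m + 1 + n).choose n)) := by
  have hpoch : (ascPochhammer K (n + 1)).eval (m + 1 : K)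
      = (m + 1) * (n ! * ((m + 1 + n).choose n)) := by
    rw [ascPochhammer_succ_left, eval_mul, eval_comp]
    simp only [eval_X, eval_add, eval_one]
    rw [← Nat.cast_one, ← Nat.cast_add, ← Nat.cast_add, ascPochhammer_nat_eq_natCast_ascFactorial,
      Nat.ascFactorial_eq_factorial_mul_choose]
    push_cast; ring
  have hchoose : ((m + 1 + n).choose n : K) ≠ 0 := by
    exact_mod_cast (Nat.choose_pos (Nat.le_add_left n (m + 1))).ne'
  have hfact : (n ! : K) ≠ 0 := by exact_mod_cast n.factorial_ne_zero
  have hm : (m + 1 : K) ≠ 0 := Nat.cast_add_one_ne_zero m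
  rw [sum_alternating_choose_div_eq_factorial_div_ascPochhammer, hpoch]
  · field_simp
  · rw [hpoch]; exact mul_ne_zero hm (mul_ne_zero hfact hchoose)

theorem mul_sum_alternating_choose_div (n : ℕ) (hn : n ≠ 0) (x : K) (hx : ∀ l ≤ n, x + l ≠ 0) :
    x * ∑ l ∈ range (n + 1), (-1) ^ l * (n.choose l : K) / (x + l)
      = ∑ l ∈ Icc 1 n, (-1) ^ (l - 1) * (n.choose l : K) * l / (x + l) := by
  have hterm : ∀ l ∈ range (n + 1), x * ((-1) ^ l * (n.choose l : K) / (x + l))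
      = (-1) ^ l * n.choose l + (-1) ^ (l - 1) * (n.choose l : K) * l / (x + l) := by
    intro l hl
    have hxl := hx l (Nat.lt_succ_iff.mp (mem_range.mp hl))
    rcases l with _ | j
    · simp only [Nat.cast_zero, add_zero, pow_zero, Nat.choose_zero_right, Nat.cast_one,
        mul_zero, zero_div] at hxl ⊢
      field_simp
    · field_simp
      push_cast
      ring
  have halternating : ∑ l ∈ range (n + 1), (-1) ^ l * (n.choose l : K) = 0 := by
    exact_mod_cast congrArg (Int.cast : ℤ → K) (Int.alternating_sum_range_choose_of_ne hn)
  rw [mul_sum, sum_congr rfl hterm, sum_add_distrib, halternating, zero_add]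
  refine (sum_subset (fun l hl ↦ ?_) fun l hl hl' ↦ ?_).symm
  · simp only [mem_Icc, mem_range] at hl ⊢; omega
  · obtain rfl : l = 0 := by simp only [mem_Icc, mem_range] at hl hl'; omega
    simp

end

theorem stmt8 (k z : ℕ) (hk : 1 ≤ k) (hz : k < z) :
    (1 : ℚ) / (z.choose k : ℚ)
      = ∑ l ∈ Finset.Icc 1 k,
          (-1 : ℚ) ^ (l - 1) * (k.choose l : ℚ) * (l : ℚ) / ((z - k + l : ℕ) : ℚ) := by
  obtain ⟨m, rfl⟩ : ∃ m, z = m + 1 + k := ⟨z - k - 1, by omega⟩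
  have hx : ∀ l ≤ k, (m + 1 : ℚ) + l ≠ 0 := fun l _ ↦ by positivity
  calc (1 : ℚ) / ((m + 1 + k).choose k : ℚ)
      = (m + 1) * (1 / ((m + 1) * ((m + 1 + k).choose k : ℚ))) := by field_simp
    _ = (m + 1) * ∑ l ∈ range (k + 1), (-1) ^ l * (k.choose l : ℚ) / ((m + 1 : ℚ) + l) := by
      rw [sum_alternating_choose_div_natCast_add_one]
    _ = _ := by
      rw [mul_sum_alternating_choose_div k (by omega) _ hx]
      refine sum_congr rfl fun l _ ↦ ?_
      rw [Nat.add_sub_cancel, Nat.cast_add, Nat.cast_add_one]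
end

section
/- For any affine alpha(l) in l with alpha(l) nonzero for 0 <= l <= k, and any complex tau: sum over l=0..k of [alpha(0)/alpha(l)] * C(tau - alpha(l), k-l) * C(alpha(l), l) equals C(tau, k). -/
open Finset

/-!
Let `R_k(B, τ) = ∑ l ≤ k, w_l(B) C(τ - B - A l, k - l)` with `w_l(B) = B / (B + A l) C(B + A l, l)`,
a polynomial in `B`. Pascal's rule gives `R_{k+1}(B, τ + 1) = R_{k+1}(B, τ) + R_k(B, τ)`, and the
weight recurrence `w_{l+1}(B + 1) = w_{l+1}(B) + w_l(B + A)` gives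
`R_{k+1}(B + 1, τ + 1) = R_{k+1}(B, τ) + R_k(B + A, τ)`. By induction on `k`, if `R_k = C(τ, k)`
then the two recurrences make `R_{k+1}` periodic of period 1 in `B`; a periodic polynomial is
constant, and at `B = 0` only the term `l = 0` survives, leaving `C(τ, k + 1)`.
-/

open Polynomial

lemma gchoose_zero_right (x : ℂ) : gchoose x 0 = 1 := by simp [gchoose]

lemma gchoose_succ_right (x : ℂ) (n : ℕ) :
    gchoose x (n + 1) = gchoose x n * (x - n) / (n + 1) := by
  simp only [gchoose, prod_range_succ, Nat.factorial_succ, Nat.cast_mul, Nat.cast_succ]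
  field_simp

lemma gchoose_succ_eq_mul_gchoose_sub_one (x : ℂ) (n : ℕ) :
    gchoose x (n + 1) = x * gchoose (x - 1) n / (n + 1) := by
  have hprod : ∏ i ∈ range n, (x - 1 - i) = ∏ i ∈ range n, (x - ((i + 1 : ℕ) : ℂ)) :=
    prod_congr rfl fun i _ => by push_cast; ring
  simp only [gchoose, prod_range_succ', hprod, Nat.factorial_succ, Nat.cast_mul, Nat.cast_succ,
    Nat.cast_zero, sub_zero]
  field_simp

lemma gchoose_succ_succ (x : ℂ) (n : ℕ) :
    gchoose (x + 1) (n + 1) = gchoose x n + gchoose x (n + 1) := by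
  rw [gchoose_succ_eq_mul_gchoose_sub_one, gchoose_succ_right, add_sub_cancel_right]
  field_simp
  ring

section PolynomialFun

variable {R : Type*} [CommRing R]

variable (R) in
noncomputable def polynomialFun : Subalgebra R (R → R) := (aeval (id : R → R)).range

lemma mem_polynomialFun_iff {f : R → R} :
    f ∈ polynomialFun R ↔ ∃ p : R[X], ∀ x, f x = p.eval x := by
  refine ⟨fun ⟨p, hp⟩ => ⟨p, fun x => by simp [← hp]⟩, fun ⟨p, hp⟩ => ⟨p, ?_⟩⟩
  funext x
  simp [hp]

lemma affine_mem_polynomialFun (a b : R) : (fun x => a * x + b) ∈ polynomialFun R :=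
  mem_polynomialFun_iff.mpr ⟨C a * X + C b, by simp⟩

lemma Function.Periodic.eq_apply_zero_of_mem_polynomialFun [IsDomain R] [CharZero R]
    {f : R → R} (hper : Function.Periodic f 1) (hf : f ∈ polynomialFun R) (x : R) :
    f x = f 0 := by
  obtain ⟨p, hp⟩ := mem_polynomialFun_iff.mp hf
  have hnat (n : ℕ) : f n = f 0 := by
    induction n with
    | zero => simp
    | succ n ih => rw [Nat.cast_succ, hper, ih]
  have hconst : p = C (f 0) := eq_of_infinite_eval_eq _ _ <|
    Set.infinite_of_injective_forall_mem Nat.cast_injective fun n => by simp [← hp, hnat]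
  rw [hp, hconst, eval_C]

end PolynomialFun

lemma gchoose_comp_mem_polynomialFun {f : ℂ → ℂ} (hf : f ∈ polynomialFun ℂ) (n : ℕ) :
    (fun x => gchoose (f x) n) ∈ polynomialFun ℂ := by
  have h : (fun x => gchoose (f x) n) =
      (n.factorial : ℂ)⁻¹ • ∏ i ∈ range n, (f - algebraMap ℂ (ℂ → ℂ) i) := by
    funext x
    simp [gchoose, div_eq_inv_mul, Finset.prod_apply]
  rw [h]
  exact Subalgebra.smul_mem _ (prod_mem fun i _ => sub_mem hf (Subalgebra.algebraMap_mem _ _)) _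

-- `B / (B + A l) * C(B + A l, l)`, with the factor `B + A l` cancelled against the binomial
noncomputable def rotheWeight (A B : ℂ) : ℕ → ℂ
  | 0 => 1
  | m + 1 => B / (m + 1) * gchoose (B + A * (m + 1) - 1) m

lemma div_mul_gchoose_eq_rotheWeight {A B : ℂ} {l : ℕ} (h : A * l + B ≠ 0) :
    B / (A * l + B) * gchoose (A * l + B) l = rotheWeight A B l := by
  cases l with
  | zero => simpa [rotheWeight, gchoose_zero_right] using div_self h
  | succ m =>
    rw [rotheWeight, gchoose_succ_eq_mul_gchoose_sub_one]
    push_cast at h ⊢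
    field_simp
    ring_nf

lemma rotheWeight_add_one_succ (A B : ℂ) (m : ℕ) :
    rotheWeight A (B + 1) (m + 1) = rotheWeight A B (m + 1) + rotheWeight A (B + A) m := by
  cases m with
  | zero => simp [rotheWeight, gchoose_zero_right]
  | succ s =>
    have hy : B + 1 + A * ((s + 1 : ℕ) + 1) - 1 = (B + A * ((s + 1 : ℕ) + 1) - 1) + 1 := by ring
    have hy' : B + A + A * (s + 1) - 1 = B + A * ((s + 1 : ℕ) + 1) - 1 := by push_cast; ring
    simp only [rotheWeight]
    rw [hy, hy', gchoose_succ_succ, gchoose_succ_right]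
    have hs : (s : ℂ) + 1 + 1 ≠ 0 := by exact_mod_cast Nat.succ_ne_zero (s + 1)
    push_cast
    field_simp
    ring

noncomputable def rotheSum (A B τ : ℂ) (k : ℕ) : ℂ :=
  ∑ l ∈ range (k + 1), rotheWeight A B l * gchoose (τ - B - A * l) (k - l)

lemma sum_mul_gchoose_add_one (a x : ℕ → ℂ) (k : ℕ) :
    ∑ l ∈ range (k + 2), a l * gchoose (x l + 1) (k + 1 - l) =
      ∑ l ∈ range (k + 2), a l * gchoose (x l) (k + 1 - l) +
        ∑ l ∈ range (k + 1), a l * gchoose (x l) (k - l) := by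
  have hpascal : ∀ l ∈ range (k + 1), a l * gchoose (x l + 1) (k + 1 - l) =
      a l * gchoose (x l) (k + 1 - l) + a l * gchoose (x l) (k - l) := by
    intro l hl
    rw [Nat.sub_add_comm (mem_range_succ_iff.mp hl), gchoose_succ_succ]
    ring
  rw [sum_range_succ, sum_range_succ _ (k + 1), sum_congr rfl hpascal, sum_add_distrib]
  simp only [Nat.sub_self, gchoose_zero_right]
  ring

lemma rotheSum_add_one_right (A B τ : ℂ) (k : ℕ) :
    rotheSum A B (τ + 1) (k + 1) = rotheSum A B τ (k + 1) + rotheSum A B τ k := by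
  have hτ : ∀ l : ℕ, τ + 1 - B - A * l = (τ - B - A * l) + 1 := fun l => by ring
  simp only [rotheSum, hτ]
  exact sum_mul_gchoose_add_one (rotheWeight A B) (fun l => τ - B - A * l) k

lemma rotheSum_add_one_add_one (A B τ : ℂ) (k : ℕ) :
    rotheSum A (B + 1) (τ + 1) (k + 1) = rotheSum A B τ (k + 1) + rotheSum A (B + A) τ k := by
  have hτ : τ + 1 - (B + 1) = τ - B := by ring
  have hshift : ∀ i : ℕ, τ - B - A * ((i + 1 : ℕ) : ℂ) = τ - (B + A) - A * i := fun i => by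
    push_cast; ring
  simp only [rotheSum, hτ]
  rw [sum_range_succ' _ (k + 1), sum_range_succ' _ (k + 1)]
  simp only [rotheWeight_add_one_succ, add_mul, sum_add_distrib, hshift, Nat.add_sub_add_right]
  simp [rotheWeight]
  ring

lemma rotheSum_zero_left (A τ : ℂ) (k : ℕ) : rotheSum A 0 τ k = gchoose τ k := by
  rw [rotheSum, sum_eq_single 0]
  · simp [rotheWeight]
  · rintro (_ | m) _ hm
    · exact absurd rfl hm
    · simp [rotheWeight]
  · simp

lemma rotheSum_zero_right (A B τ : ℂ) : rotheSum A B τ 0 = gchoose τ 0 := by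
  simp [rotheSum, rotheWeight, gchoose_zero_right]

lemma rotheSum_periodic_left {A : ℂ} {k : ℕ} (hk : ∀ B τ, rotheSum A B τ k = gchoose τ k)
    (τ : ℂ) : Function.Periodic (fun B => rotheSum A B τ (k + 1)) 1 := by
  intro B
  have h₁ := rotheSum_add_one_right A (B + 1) τ k
  have h₂ := rotheSum_add_one_add_one A B τ k
  rw [hk] at h₁ h₂
  linear_combination h₂ - h₁

lemma rotheWeight_mem_polynomialFun (A : ℂ) (l : ℕ) :
    (fun B => rotheWeight A B l) ∈ polynomialFun ℂ := by
  cases l with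
  | zero => exact one_mem _
  | succ m =>
    have h : (fun B => rotheWeight A B (m + 1)) =
        (fun B => (m + 1 : ℂ)⁻¹ * B + 0) * fun B => gchoose (1 * B + (A * (m + 1) - 1)) m := by
      funext B
      simp only [rotheWeight, Pi.mul_apply]
      ring_nf
    rw [h]
    exact mul_mem (affine_mem_polynomialFun _ _)
      (gchoose_comp_mem_polynomialFun (affine_mem_polynomialFun _ _) m)

lemma rotheSum_mem_polynomialFun (A τ : ℂ) (k : ℕ) :
    (fun B => rotheSum A B τ k) ∈ polynomialFun ℂ := by
  have h : (fun B => rotheSum A B τ k) = ∑ l ∈ range (k + 1),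
      (fun B => rotheWeight A B l) * fun B => gchoose (-1 * B + (τ - A * l)) (k - l) := by
    funext B
    simp only [rotheSum, Finset.sum_apply, Pi.mul_apply]
    ring_nf
  rw [h]
  exact sum_mem fun l _ => mul_mem (rotheWeight_mem_polynomialFun A l)
    (gchoose_comp_mem_polynomialFun (affine_mem_polynomialFun _ _) _)

lemma rotheSum_eq_gchoose (A B τ : ℂ) (k : ℕ) : rotheSum A B τ k = gchoose τ k := by
  induction k generalizing B τ with
  | zero => exact rotheSum_zero_right A B τ
  | succ k ih =>
    rw [(rotheSum_periodic_left ih τ).eq_apply_zero_of_mem_polynomialFun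
      (rotheSum_mem_polynomialFun A τ (k + 1)) B, rotheSum_zero_left]

theorem stmt9 (k : ℕ) (A B : ℂ)
    (hα : ∀ l : ℕ, l ≤ k → A * l + B ≠ 0)
    (τ : ℂ) :
    ∑ l ∈ Finset.range (k + 1),
      (B / (A * l + B)) * gchoose (τ - (A * l + B)) (k - l) * gchoose (A * l + B) l
      = gchoose τ k := by
  rw [← rotheSum_eq_gchoose A B τ k, rotheSum]
  refine sum_congr rfl fun l hl => ?_
  rw [← div_mul_gchoose_eq_rotheWeight (hα l (mem_range_succ_iff.mp hl)), sub_add_eq_sub_sub_swap]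
  ring
end

section
/- For any sequence x = (x_1, x_2, ...) and integers 0 <= l <= k, 0 <= m <= n: C(n,m) * B_{m,l}(x) * B_{n-m,k-l}(x) equals the sum over v in pi(n,k) of [n!/(v_1! v_2! ...)] * W_{m,l}(v) * (x_1/1!)^{v_1} * (x_2/2!)^{v_2} * ..., where W_{m,l}(v) = sum over i in pi(m,l) of C(v_1,i_1)*C(v_2,i_2)*... . -/
open Finset

/-- The partial Bell polynomial `B_{n,k}(x₁, x₂, …)` evaluated at the sequence `x`. -/
noncomputable def Bell (n k : ℕ) (x : ℕ → ℂ) : ℂ :=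
  ∑ i ∈ parts n n k,
    ((n.factorial : ℂ) / ∏ j, ((i j).factorial : ℂ)) *
      ∏ j : Fin n, (x ((j : ℕ) + 1) / (((j : ℕ) + 1).factorial : ℂ)) ^ (i j)

/-!
Pad every tuple with zeros to length `n`, so that both Bell polynomials and the right-hand side
become sums over `Fin n → ℕ`. Expanding `W`, the right-hand side is a double sum over
`i ∈ π(m,l)` and `v ∈ π(n,k)`; only `v ≥ i` contributes, since otherwise some `C(v_r, i_r)`
vanishes. Substituting `v = i + j` with `j ∈ π(n-m, k-l)` and using
`C(i_r + j_r, i_r) i_r! j_r! = (i_r + j_r)!` matches it term by term with the product of the two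
expanded Bell polynomials.
-/

open Nat Function

lemma weighted_le_of_sum_eq {d N : ℕ} {i : Fin d → ℕ} (hi : ∑ j : Fin d, ((j : ℕ) + 1) * i j = N)
    (r : Fin d) : ((r : ℕ) + 1) * i r ≤ N :=
  hi ▸ single_le_sum (f := fun j : Fin d => ((j : ℕ) + 1) * i j) (fun _ _ => zero_le _) (mem_univ r)

lemma mem_parts_s10 {d N K : ℕ} {i : Fin d → ℕ} :
    i ∈ parts d N K ↔ ∑ j, i j = K ∧ ∑ j : Fin d, ((j : ℕ) + 1) * i j = N := by
  simp only [parts, mem_filter, Fintype.mem_piFinset, mem_range, and_iff_right_iff_imp]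
  rintro ⟨-, hN⟩ r
  nlinarith [weighted_le_of_sum_eq hN r]

lemma eq_zero_of_mem_parts {d N K : ℕ} {v : Fin d → ℕ} (hv : v ∈ parts d N K) {r : Fin d}
    (hr : N ≤ r) : v r = 0 := by
  nlinarith [weighted_le_of_sum_eq (mem_parts_s10.mp hv).2 r]

noncomputable def padZero {d n : ℕ} (h : d ≤ n) (i : Fin d → ℕ) : Fin n → ℕ :=
  extend (Fin.castLE h) i 0

section padZero

variable {d n : ℕ} (h : d ≤ n)

lemma padZero_castLE (i : Fin d → ℕ) (r : Fin d) : padZero h i (Fin.castLE h r) = i r :=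
  (Fin.castLE_injective h).extend_apply i 0 r

lemma padZero_of_le (i : Fin d → ℕ) {r : Fin n} (hr : d ≤ r) : padZero h i r = 0 :=
  extend_apply' _ _ _ fun ⟨s, hs⟩ => (hs ▸ hr).not_gt s.isLt

@[to_additive]
lemma prod_padZero {M : Type*} [CommMonoid M] (F : Fin n → ℕ → M) (hF : ∀ r, F r 0 = 1)
    (i : Fin d → ℕ) : ∏ r, F r (padZero h i r) = ∏ r, F (Fin.castLE h r) (i r) := by
  refine (Fintype.prod_of_injective _ (Fin.castLE_injective h) _ _ (fun r hr => ?_)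
    (fun r => by rw [padZero_castLE])).symm
  rw [padZero, extend_apply' _ _ _ hr, Pi.zero_apply, hF]

lemma padZero_mem_parts_iff {N K : ℕ} {i : Fin d → ℕ} :
    padZero h i ∈ parts n N K ↔ i ∈ parts d N K := by
  simp only [mem_parts_s10, sum_padZero h (fun _ t => t) (fun _ => rfl),
    sum_padZero h (fun r t => ((r : ℕ) + 1) * t) (fun _ => mul_zero _), Fin.val_castLE]

lemma padZero_restrict {K : ℕ} {v : Fin n → ℕ} (hv : v ∈ parts n d K) :
    padZero h (v ∘ Fin.castLE h) = v := by
  funext r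
  by_cases hr : (r : ℕ) < d
  · exact padZero_castLE h _ ⟨r, hr⟩
  · rw [padZero_of_le h _ (not_lt.mp hr), eq_zero_of_mem_parts hv (not_lt.mp hr)]

lemma sum_parts_eq_sum_padZero {M : Type*} [AddCommMonoid M] (K : ℕ) (f : (Fin n → ℕ) → M) :
    ∑ v ∈ parts n d K, f v = ∑ i ∈ parts d d K, f (padZero h i) := by
  refine sum_nbij' (· ∘ Fin.castLE h) (padZero h) (fun v hv => ?_)
    (fun i hi => (padZero_mem_parts_iff h).mpr hi) (fun v hv => padZero_restrict h hv)
    (fun i _ => funext (padZero_castLE h i)) (fun v hv => by rw [padZero_restrict h hv])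
  rw [← padZero_mem_parts_iff h, padZero_restrict h hv]
  exact hv

end padZero

lemma Bell_eq_sum_parts {d n : ℕ} (h : d ≤ n) (K : ℕ) (x : ℕ → ℂ) :
    Bell d K x = ∑ v ∈ parts n d K,
      ((d ! : ℂ) / ∏ j, ((v j)! : ℂ)) * ∏ j : Fin n, (x (j + 1) / ((j + 1)! : ℂ)) ^ v j := by
  rw [Bell, sum_parts_eq_sum_padZero h]
  refine sum_congr rfl fun i _ => ?_
  rw [prod_padZero h (fun _ t => (t ! : ℂ)) (fun _ => by simp),
    prod_padZero h (fun r t => (x (r + 1) / ((r + 1)! : ℂ)) ^ t) (fun _ => pow_zero _)]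
  rfl

section convolution

variable {d m l n k : ℕ} {i : Fin d → ℕ}

lemma add_mem_parts_iff (hi : i ∈ parts d m l) (hm : m ≤ n) (hl : l ≤ k) {j : Fin d → ℕ} :
    i + j ∈ parts d n k ↔ j ∈ parts d (n - m) (k - l) := by
  obtain ⟨hl', hm'⟩ := mem_parts_s10.mp hi
  simp only [mem_parts_s10, Pi.add_apply, mul_add, sum_add_distrib, hl', hm']
  omega

lemma sum_parts_le_eq_sum_parts_add {M : Type*} [AddCommMonoid M] (hi : i ∈ parts d m l)
    (hm : m ≤ n) (hl : l ≤ k) (f : (Fin d → ℕ) → M) :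
    ∑ v ∈ parts d n k with ∀ r, i r ≤ v r, f v = ∑ j ∈ parts d (n - m) (k - l), f (i + j) := by
  have hadd {v} (hv : v ∈ {v ∈ parts d n k | ∀ r, i r ≤ v r}) : i + (v - i) = v :=
    add_tsub_cancel_of_le (mem_filter.mp hv).2
  refine sum_nbij' (· - i) (i + ·) (fun v hv => ?_) (fun j hj => ?_)
    (fun v hv => hadd hv) (fun j _ => add_tsub_cancel_left i j) (fun v hv => by rw [hadd hv])
  · rw [← add_mem_parts_iff hi hm hl, hadd hv]
    exact (mem_filter.mp hv).1
  · exact mem_filter.mpr ⟨(add_mem_parts_iff hi hm hl).mpr hj, fun r => le_self_add⟩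

lemma prod_choose_eq_zero_of_exists_lt {v : Fin d → ℕ} (h : ∃ r, v r < i r) :
    ∏ r, (v r).choose (i r) = 0 :=
  let ⟨r, hr⟩ := h
  prod_eq_zero (mem_univ r) (choose_eq_zero_of_lt hr)

lemma sum_parts_mul_W {R : Type*} [CommSemiring R] (hm : m ≤ n) (hl : l ≤ k)
    (f : (Fin d → ℕ) → R) :
    ∑ v ∈ parts d n k, f v * W d m l v
      = ∑ i ∈ parts d m l, ∑ j ∈ parts d (n - m) (k - l),
          f (i + j) * ∏ r, ((i r + j r).choose (i r) : R) := by
  simp only [W, Nat.cast_sum, mul_sum]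
  rw [sum_comm]
  refine sum_congr rfl fun i hi => ?_
  rw [← sum_filter_of_ne (p := fun v => ∀ r, i r ≤ v r), sum_parts_le_eq_sum_parts_add hi hm hl]
  · simp only [Pi.add_apply, Nat.cast_prod]
  · intro v _ hv
    contrapose! hv
    rw [prod_choose_eq_zero_of_exists_lt hv, Nat.cast_zero, mul_zero]

end convolution

lemma factorial_div_prod_factorial_add_mul_prod_choose {K ι : Type*} [Field K] [CharZero K]
    [Fintype ι] {m n : ℕ} (hm : m ≤ n) (i j : ι → ℕ) :
    (n ! : K) / (∏ r, ((i r + j r)! : K)) * ∏ r, ((i r + j r).choose (i r) : K)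
      = n.choose m * ((m ! : K) / ∏ r, ((i r)! : K)) * (((n - m)! : K) / ∏ r, ((j r)! : K)) := by
  have hfac : ∏ r, ((i r + j r)! : K)
      = (∏ r, ((i r + j r).choose (i r) : K)) * (∏ r, ((i r)! : K)) * ∏ r, ((j r)! : K) := by
    rw [← prod_mul_distrib, ← prod_mul_distrib]
    refine prod_congr rfl fun r _ => ?_
    rw [← choose_mul_factorial_mul_factorial (le_add_right (i r) (j r)), add_tsub_cancel_left]
    norm_cast
  have hchoose : ∏ r, ((i r + j r).choose (i r) : K) ≠ 0 :=
    prod_ne_zero_iff.mpr fun r _ => cast_ne_zero.mpr (choose_pos le_self_add).ne'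
  rw [hfac, cast_choose K hm]
  field_simp [cast_ne_zero.mpr (factorial_ne_zero m), cast_ne_zero.mpr (factorial_ne_zero (n - m))]

theorem stmt10 (n k m l : ℕ) (hl : l ≤ k) (hm : m ≤ n) (x : ℕ → ℂ) :
    (n.choose m : ℂ) * Bell m l x * Bell (n - m) (k - l) x
      = ∑ v ∈ parts n n k,
          ((n.factorial : ℂ) / ∏ j, ((v j).factorial : ℂ)) * (W n m l v : ℂ) *
            ∏ j : Fin n, (x ((j : ℕ) + 1) / (((j : ℕ) + 1).factorial : ℂ)) ^ (v j) := by
  simp_rw [mul_right_comm _ (W n m l _ : ℂ)]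
  rw [sum_parts_mul_W hm hl, Bell_eq_sum_parts hm, Bell_eq_sum_parts (n.sub_le m),
    mul_assoc, sum_mul_sum, mul_sum]
  refine sum_congr rfl fun i _ => (mul_sum ..).trans (sum_congr rfl fun j _ => ?_)
  symm
  simp only [Pi.add_apply]
  rw [mul_right_comm, factorial_div_prod_factorial_add_mul_prod_choose hm]
  simp only [pow_add, prod_mul_distrib]
  ring
end

section
/- Define Q_{n,b}(lambda, z) = sum over k=1..n of C(lambda + b*k, k-1) * (k-1)! * B_{n,k}(z). For a positive integer lambda and any sequence z: Q_{n,0}(lambda,z) = z_n + sum over i=1..lambda of [i/(lambda+1)] * sum over m=1..n-1 of C(n,m) * z_{n-m} * Q_{m,0}(i-1,z). -/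
/-!
With `F = ∑_{j ≥ 1} z_j t^j / j!`, the multinomial theorem gives `n! [t^n] F^k = k! B_{n,k}(z)`,
so `i · Q_{m,0}(i - 1, z) = ∑_k C(i,k) k! B_{m,k}(z) = m! [t^m] (1 + F)^i`. The recurrence is
the coefficient of `t^n` in the geometric sum `(1 + F)^(λ+1) - 1 = F · ∑_{i ≤ λ} (1 + F)^i`,
each product `F · (1 + F)^i` being expanded by the Leibniz rule for exponential series.
-/

open Finset

noncomputable def Q (n : ℕ) (b : ℤ) (lam : ℂ) (z : ℕ → ℂ) : ℂ :=
  ∑ k ∈ Finset.Icc 1 n,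
    gchoose (lam + (b : ℂ) * (k : ℂ)) (k - 1) * ((k - 1).factorial : ℂ) * Bell n k z

open PowerSeries

lemma gchoose_natCast (a j : ℕ) : gchoose (a : ℂ) j = (a.choose j : ℂ) := by
  rw [gchoose, ← descPochhammer_eval_eq_prod_range, Nat.cast_choose_eq_descPochhammer_div]

lemma PowerSeries.coeff_pow_congr {R : Type*} [CommSemiring R] {f g : R⟦X⟧} {n : ℕ}
    (h : ∀ m ≤ n, coeff m f = coeff m g) (k : ℕ) : coeff n (f ^ k) = coeff n (g ^ k) := by
  have htrunc : trunc (n + 1) f = trunc (n + 1) g := by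
    ext m
    simp only [coeff_trunc, Nat.lt_succ_iff]
    split_ifs with hm
    exacts [h m hm, rfl]
  rw [← coeff_coe_trunc_of_lt n.lt_succ_self, ← trunc_trunc_pow, htrunc, trunc_trunc_pow,
    coeff_coe_trunc_of_lt n.lt_succ_self]

lemma PowerSeries.coeff_sum_monomial_pow {R ι : Type*} [CommSemiring R] [DecidableEq ι]
    (s : Finset ι) (w : ι → ℕ) (c : ι → R) (n k : ℕ) :
    coeff n ((∑ j ∈ s, monomial (w j) (c j)) ^ k)
      = ∑ l ∈ (piAntidiag s k).filter (fun l => ∑ j ∈ s, w j * l j = n),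
          (Nat.multinomial s l : R) * ∏ j ∈ s, c j ^ l j := by
  rw [sum_pow_eq_sum_piAntidiag, map_sum, sum_filter]
  refine sum_congr rfl fun l _ => ?_
  simp only [monomial_pow, prod_monomial, ← map_natCast (C (R := R)), coeff_C_mul, coeff_monomial]
  split_ifs <;> simp_all [eq_comm, mul_comm]

-- `z 0` is dropped: it does not occur in any `B_{n,k}(z)`.
noncomputable def egf (z : ℕ → ℂ) : ℂ⟦X⟧ :=
  mk fun j => if j = 0 then 0 else z j / (j.factorial : ℂ)

lemma constantCoeff_egf (z : ℕ → ℂ) : constantCoeff (egf z) = 0 := by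
  simp [egf, ← coeff_zero_eq_constantCoeff_apply]

lemma coeff_egf_eq_coeff_sum_monomial (z : ℕ → ℂ) {n m : ℕ} (hm : m ≤ n) :
    coeff m (egf z) = coeff m (∑ j : Fin n,
      monomial ((j : ℕ) + 1) (z ((j : ℕ) + 1) / (((j : ℕ) + 1).factorial : ℂ))) := by
  rw [map_sum, Fin.sum_univ_eq_sum_range (fun j => coeff m (monomial (j + 1)
    (z (j + 1) / ((j + 1).factorial : ℂ))))]
  rcases m with _ | m
  · simp [egf, coeff_monomial]
  · simp [egf, coeff_monomial, eq_comm (a := m)]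
    omega

lemma parts_eq_filter_piAntidiag (n k : ℕ) :
    parts n n k = (piAntidiag univ k).filter
      (fun l : Fin n → ℕ => ∑ j : Fin n, ((j : ℕ) + 1) * l j = n) := by
  ext l
  simp only [parts, mem_filter, mem_piAntidiag, Fintype.mem_piFinset, mem_range, mem_univ,
    implies_true, and_true]
  refine ⟨fun ⟨_, hk, hn⟩ => ⟨hk, hn⟩, fun ⟨hk, hn⟩ => ⟨fun j => ?_, hk, hn⟩⟩
  have := single_le_sum (fun (t : Fin n) _ => Nat.zero_le (((t : ℕ) + 1) * l t)) (mem_univ j)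
  nlinarith

lemma Bell_eq_zero_of_lt (z : ℕ → ℂ) {n k : ℕ} (h : n < k) : Bell n k z = 0 := by
  refine sum_eq_zero fun l hl => absurd hl fun hl => ?_
  obtain ⟨-, hk, hn⟩ := mem_filter.1 hl
  have : ∑ j, l j ≤ ∑ j : Fin n, ((j : ℕ) + 1) * l j :=
    sum_le_sum fun j _ => Nat.le_mul_of_pos_left _ j.val.succ_pos
  omega

lemma coeff_egf_pow (z : ℕ → ℂ) (n k : ℕ) :
    coeff n (egf z ^ k) = (k.factorial : ℂ) / (n.factorial : ℂ) * Bell n k z := by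
  rw [coeff_pow_congr (fun m => coeff_egf_eq_coeff_sum_monomial z) k, coeff_sum_monomial_pow,
    ← parts_eq_filter_piAntidiag, Bell, mul_sum]
  refine sum_congr rfl fun l hl => ?_
  have hk : ∑ j, l j = k := (mem_filter.1 hl).2.1
  have hspec : (∏ j, ((l j).factorial : ℂ)) * (Nat.multinomial univ l : ℂ) = k.factorial := by
    exact_mod_cast hk ▸ Nat.multinomial_spec univ l
  have hprod : (∏ j, ((l j).factorial : ℂ)) ≠ 0 :=
    prod_ne_zero_iff.2 fun j _ => Nat.cast_ne_zero.2 (l j).factorial_ne_zero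
  have hn : (n.factorial : ℂ) ≠ 0 := Nat.cast_ne_zero.2 n.factorial_ne_zero
  rw [← hspec]
  field_simp

lemma Bell_zero_right (z : ℕ → ℂ) {n : ℕ} (hn : n ≠ 0) : Bell n 0 z = 0 := by
  have h := coeff_egf_pow z n 0
  rw [pow_zero, coeff_one, if_neg hn] at h
  simpa [n.factorial_ne_zero] using h.symm

lemma factorial_mul_coeff_egf_mul (z : ℕ → ℂ) {n : ℕ} (hn : 1 ≤ n) (G : ℂ⟦X⟧) :
    n.factorial * coeff n (egf z * G) = z n * constantCoeff G +
      ∑ m ∈ Icc 1 (n - 1), (n.choose m : ℂ) * z (n - m) * (m.factorial * coeff m G) := by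
  have hsplit : range (n + 1) = insert 0 (insert n (Icc 1 (n - 1))) := by
    ext m; simp only [mem_range, mem_insert, mem_Icc]; omega
  rw [mul_comm (egf z), coeff_mul, Nat.sum_antidiagonal_eq_sum_range_succ_mk, hsplit,
    sum_insert (by simp; omega), sum_insert (by simp; omega), mul_add, mul_add, mul_sum]
  simp only [egf, coeff_mk, Nat.sub_self, Nat.sub_zero, ← coeff_zero_eq_constantCoeff_apply]
  have hnf : (n.factorial : ℂ) ≠ 0 := Nat.cast_ne_zero.2 n.factorial_ne_zero
  rw [if_neg (by omega), if_pos trivial, mul_zero, mul_zero, zero_add]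
  congr 1
  · field_simp
  · refine sum_congr rfl fun m hm => ?_
    obtain ⟨hm1, hmn⟩ := mem_Icc.1 hm
    have hmf : ((n - m).factorial : ℂ) ≠ 0 := Nat.cast_ne_zero.2 (n - m).factorial_ne_zero
    have hmf' : (m.factorial : ℂ) ≠ 0 := Nat.cast_ne_zero.2 m.factorial_ne_zero
    rw [if_neg (by omega), Nat.cast_choose ℂ (by omega : m ≤ n)]
    field_simp

lemma factorial_mul_coeff_one_add_egf_pow (z : ℕ → ℂ) {n : ℕ} (hn : 1 ≤ n) (i : ℕ) :
    n.factorial * coeff n ((1 + egf z) ^ i)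
      = ∑ k ∈ Icc 1 n, (i.choose k : ℂ) * k.factorial * Bell n k z := by
  set f : ℕ → ℂ := fun k => (i.choose k : ℂ) * k.factorial * Bell n k z
  have hf : ∀ k, k = 0 ∨ i < k ∨ n < k → f k = 0 := by
    rintro k (rfl | hik | hnk)
    · simp [f, Bell_zero_right z (by omega : n ≠ 0)]
    · simp [f, Nat.choose_eq_zero_of_lt hik]
    · simp [f, Bell_eq_zero_of_lt z hnk]
  have hnf : (n.factorial : ℂ) ≠ 0 := Nat.cast_ne_zero.2 n.factorial_ne_zero
  calc n.factorial * coeff n ((1 + egf z) ^ i) = ∑ k ∈ range (i + 1), f k := by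
        rw [add_comm, add_pow, map_sum, mul_sum]
        refine sum_congr rfl fun k _ => ?_
        rw [one_pow, mul_one, ← map_natCast (C (R := ℂ)), coeff_mul_C, coeff_egf_pow]
        field_simp
        ring
    _ = ∑ k ∈ range (i + n + 1), f k :=
        sum_subset (range_subset_range.2 (by omega)) fun k _ hk => hf k (by simp at hk; omega)
    _ = ∑ k ∈ Icc 1 n, f k :=
        (sum_subset (fun k hk => by simp at hk ⊢; omega) fun k _ hk =>
          hf k (by simp at hk ⊢; omega)).symm

lemma factorial_mul_coeff_one_add_egf_pow_succ (z : ℕ → ℂ) {n : ℕ} (hn : 1 ≤ n) (lam : ℕ) :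
    n.factorial * coeff n ((1 + egf z) ^ (lam + 1)) = ((lam : ℂ) + 1) * z n +
      ∑ i ∈ Icc 1 lam, ∑ m ∈ Icc 1 (n - 1),
        (n.choose m : ℂ) * z (n - m) * (m.factorial * coeff m ((1 + egf z) ^ i)) := by
  have hgeom : (1 + egf z) ^ (lam + 1) = 1 + egf z * ∑ i ∈ range (lam + 1), (1 + egf z) ^ i := by
    have h := geom_sum_mul (1 + egf z) (lam + 1)
    rw [add_sub_cancel_left] at h
    rw [mul_comm, h, add_sub_cancel]
  have hrange : range (lam + 1) = insert 0 (Icc 1 lam) := by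
    ext i; simp only [mem_range, mem_insert, mem_Icc]; omega
  rw [hgeom, map_add, coeff_one, if_neg (by omega), zero_add, mul_sum, map_sum, mul_sum]
  simp only [factorial_mul_coeff_egf_mul z hn, map_pow, map_add, constantCoeff_one,
    constantCoeff_egf, add_zero, one_pow, mul_one, sum_add_distrib, sum_const, card_range,
    nsmul_eq_mul]
  rw [hrange, sum_insert (by simp)]
  simp

lemma natCast_mul_Q_zero_sub_one (z : ℕ → ℂ) (m : ℕ) {i : ℕ} (hi : 1 ≤ i) :
    (i : ℂ) * Q m 0 ((i : ℂ) - 1) z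
      = ∑ k ∈ Icc 1 m, (i.choose k : ℂ) * k.factorial * Bell m k z := by
  obtain ⟨j, rfl⟩ : ∃ j, i = j + 1 := ⟨i - 1, by omega⟩
  rw [Q, mul_sum]
  refine sum_congr rfl fun k hk => ?_
  obtain ⟨k, rfl⟩ : ∃ k', k = k' + 1 := ⟨k - 1, by simp at hk; omega⟩
  have hcast : ((j + 1 : ℕ) : ℂ) - 1 + ((0 : ℤ) : ℂ) * ((k + 1 : ℕ) : ℂ) = (j : ℂ) := by
    push_cast; ring
  have hchoose : ((j + 1 : ℕ) : ℂ) * j.choose k = (j + 1).choose (k + 1) * (k + 1 : ℕ) := by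
    exact_mod_cast Nat.add_one_mul_choose_eq j k
  rw [hcast, gchoose_natCast, Nat.add_sub_cancel, Nat.factorial_succ, Nat.cast_mul,
    ← mul_assoc, ← mul_assoc, hchoose]
  ring

lemma natCast_mul_Q_zero_sub_one_eq_coeff (z : ℕ → ℂ) {m i : ℕ} (hm : 1 ≤ m) (hi : 1 ≤ i) :
    (i : ℂ) * Q m 0 ((i : ℂ) - 1) z = m.factorial * coeff m ((1 + egf z) ^ i) := by
  rw [natCast_mul_Q_zero_sub_one z m hi, factorial_mul_coeff_one_add_egf_pow z hm]

theorem stmt16_general (n : ℕ) (hn : 1 ≤ n) (lam : ℕ) (z : ℕ → ℂ) :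
    Q n 0 (lam : ℂ) z
      = z n + ∑ i ∈ Finset.Icc 1 lam,
          ((i : ℂ) / ((lam : ℂ) + 1)) *
            ∑ m ∈ Finset.Icc 1 (n - 1),
              (n.choose m : ℂ) * z (n - m) * Q m 0 ((i : ℂ) - 1) z := by
  have hlam : (lam : ℂ) + 1 ≠ 0 := Nat.cast_add_one_ne_zero lam
  have hQ := natCast_mul_Q_zero_sub_one_eq_coeff z hn (Nat.le_add_left 1 lam)
  push_cast at hQ
  rw [add_sub_cancel_right, factorial_mul_coeff_one_add_egf_pow_succ z hn] at hQ
  refine mul_left_cancel₀ hlam (hQ.trans ?_)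
  rw [mul_add, mul_sum]
  congr 1
  refine sum_congr rfl fun i hi => ?_
  rw [← mul_assoc, mul_div_cancel₀ _ hlam, mul_sum]
  refine sum_congr rfl fun m hm => ?_
  rw [mul_left_comm (i : ℂ), natCast_mul_Q_zero_sub_one_eq_coeff z (mem_Icc.1 hm).1 (mem_Icc.1 hi).1]

theorem stmt16 (n : ℕ) (hn : 1 ≤ n) (lam : ℕ) (hlam : 0 < lam) (z : ℕ → ℂ) :
    Q n 0 (lam : ℂ) z
      = z n + ∑ i ∈ Finset.Icc 1 lam,
          ((i : ℂ) / ((lam : ℂ) + 1)) *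
            ∑ m ∈ Finset.Icc 1 (n - 1),
              (n.choose m : ℂ) * z (n - m) * Q m 0 ((i : ℂ) - 1) z :=
  stmt16_general n hn lam z
end
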